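/- arXiv:2309.12523 — 5 statements merged into one kernel-verified Lean document; each statement's English description precedes it below -/
import Mathlib

section
/- If S is a d×d complex matrix that is symmetric (Sᵀ = S) and unitary (S⋆S = 1), then there exists a real orthogonal d×d matrix O (all entries real, OᵀO = 1) such that O·S·Oᵀ is a diagonal matrix, and every diagonal entry of O·S·Oᵀ has absolute value 1. -/
open Matrix Kronecker

noncomputable section

open Module.End LinearMap in
theorem jointDiag {d : ℕ} (A B : Matrix (Fin d) (Fin d) ℝ)
    (hA : Aᵀ = A) (hB : Bᵀ = B) (hAB : A * B = B * A) :
    ∃ (O : Matrix (Fin d) (Fin d) ℝ) (a b : Fin d → ℝ),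
      O * Oᵀ = 1 ∧ O * A * Oᵀ = Matrix.diagonal a ∧ O * B * Oᵀ = Matrix.diagonal b := by
  classical
  have hAh : A.IsHermitian := by
    rwa [Matrix.IsHermitian, Matrix.conjTranspose_eq_transpose_of_trivial]
  have hBh : B.IsHermitian := by
    rwa [Matrix.IsHermitian, Matrix.conjTranspose_eq_transpose_of_trivial]
  have hTA : (Matrix.toEuclideanLin A).IsSymmetric := Matrix.isHermitian_iff_isSymmetric.1 hAh
  have hTB : (Matrix.toEuclideanLin B).IsSymmetric := Matrix.isHermitian_iff_isSymmetric.1 hBh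
  have hmul : ∀ M N : Matrix (Fin d) (Fin d) ℝ,
      Matrix.toEuclideanLin (M * N) = Matrix.toEuclideanLin M * Matrix.toEuclideanLin N := by
    intro M N
    rw [Matrix.toEuclideanLin_eq_toLin, Matrix.toLin_mul _ (PiLp.basisFun 2 ℝ (Fin d)) _,
      Module.End.mul_eq_comp]
  have hcomm : Commute (Matrix.toEuclideanLin A) (Matrix.toEuclideanLin B) := by
    unfold Commute SemiconjBy
    rw [← hmul, ← hmul, hAB]
  set V : ℝ × ℝ → Submodule ℝ (EuclideanSpace ℝ (Fin d)) :=
    fun p => eigenspace (Matrix.toEuclideanLin A) p.2 ⊓ eigenspace (Matrix.toEuclideanLin B) p.1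
    with hVdef
  have hint : DirectSum.IsInternal V := hTA.directSum_isInternal_of_commute hTB hcomm
  have hofam : OrthogonalFamily ℝ (fun p : ℝ × ℝ => V p) (fun p => (V p).subtypeₗᵢ) :=
    hTA.orthogonalFamily_eigenspace_inf_eigenspace hTB
  obtain ⟨hind, hsup⟩ := (DirectSum.isInternal_submodule_iff_iSupIndep_and_iSup_eq_top V).1 hint
  haveI : Fintype {p : ℝ × ℝ // V p ≠ ⊥} := hind.fintypeNeBotOfFiniteDimensional
  have hint' : DirectSum.IsInternal (fun p : {p : ℝ × ℝ // V p ≠ ⊥} => V p) := by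
    refine (DirectSum.isInternal_submodule_iff_iSupIndep_and_iSup_eq_top _).2
      ⟨hind.comp Subtype.val_injective, ?_⟩
    rw [iSup_ne_bot_subtype V]; exact hsup
  have hofam' : OrthogonalFamily ℝ (fun p : {p : ℝ × ℝ // V p ≠ ⊥} => V p)
      (fun p => (V p).subtypeₗᵢ) := fun p q hpq => hofam (Subtype.val_injective.ne hpq)
  have hfr : Module.finrank ℝ (EuclideanSpace ℝ (Fin d)) = d := finrank_euclideanSpace_fin
  set b := hint'.subordinateOrthonormalBasis hfr hofam' with hbdef
  set idx := fun i : Fin d => hint'.subordinateOrthonormalBasisIndex hfr i hofam' with hidxdef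
  have hmem : ∀ i, (b i : EuclideanSpace ℝ (Fin d)) ∈ V (idx i) := fun i =>
    hint'.subordinateOrthonormalBasis_subordinate hfr i hofam'
  set O : Matrix (Fin d) (Fin d) ℝ := Matrix.of (fun i j => b i j) with hOdef
  have hOO : O * Oᵀ = 1 := by
    ext i j
    have h2 := (orthonormal_iff_ite.mp b.orthonormal) i j
    rw [PiLp.inner_apply] at h2
    simpa [hOdef, Matrix.mul_apply, Matrix.one_apply, mul_comm] using h2
  -- key computation
  have key : ∀ (M : Matrix (Fin d) (Fin d) ℝ) (μ : Fin d → ℝ),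
      (∀ j, Matrix.toEuclideanLin M (b j) = μ j • b j) →
      O * M * Oᵀ = Matrix.diagonal μ := by
    intro M μ hμ
    have hMv : ∀ j k, (M * Oᵀ) k j = μ j * b j k := by
      intro j k
      have := congrFun (congrArg (WithLp.equiv 2 (Fin d → ℝ)) (hμ j)) k
      change (M *ᵥ WithLp.ofLp (b j)) k = _ at this
      simpa [hOdef, Matrix.mul_apply, Matrix.mulVec, dotProduct] using this
    ext i j
    rw [Matrix.mul_assoc, Matrix.mul_apply]
    simp only [hMv]
    have : ∑ k, O i k * (μ j * b j k) = μ j * (O * Oᵀ) i j := by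
      rw [Matrix.mul_apply, Finset.mul_sum]
      exact Finset.sum_congr rfl fun k _ => by simp [hOdef]; ring
    rw [this, hOO, Matrix.one_apply, Matrix.diagonal_apply]
    split <;> simp_all
  refine ⟨O, fun i => (idx i).1.2, fun i => (idx i).1.1, hOO, ?_, ?_⟩
  · exact key A _ fun j => mem_eigenspace_iff.mp ((hmem j).1)
  · exact key B _ fun j => mem_eigenspace_iff.mp ((hmem j).2)

theorem stmt0 {d : ℕ} (S : Matrix (Fin d) (Fin d) ℂ)
    (hsymm : Sᵀ = S) (hunit : Sᴴ * S = 1) :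
    ∃ O : Matrix (Fin d) (Fin d) ℂ, (∀ i j, (O i j).im = 0) ∧ Oᵀ * O = 1 ∧
      (O * S * Oᵀ).IsDiag ∧ ∀ i, ‖(O * S * Oᵀ) i i‖ = 1 := by
  classical
  set A : Matrix (Fin d) (Fin d) ℝ := Matrix.of (fun i j => (S i j).re) with hAdef
  set B : Matrix (Fin d) (Fin d) ℝ := Matrix.of (fun i j => (S i j).im) with hBdef
  set f := Complex.ofRealHom with hfdef
  have hSsymm : ∀ i j, S j i = S i j := fun i j => congrFun (congrFun hsymm i) j
  have hAt : Aᵀ = A := by ext i j; simp [hAdef, hSsymm i j]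
  have hBt : Bᵀ = B := by ext i j; simp [hBdef, hSsymm i j]
  have hS' : S = A.map f + Complex.I • B.map f := by
    ext i j
    simp [hAdef, hBdef, hfdef, Complex.ext_iff]
  have hconj : Sᴴ = A.map f - Complex.I • B.map f := by
    ext i j
    simp [hAdef, hBdef, hfdef, Matrix.conjTranspose_apply, hSsymm i j, Complex.ext_iff]
  have expand : (A.map f - Complex.I • B.map f) * (A.map f + Complex.I • B.map f)
      = (A.map f * A.map f + B.map f * B.map f)
        + Complex.I • (A.map f * B.map f) - Complex.I • (B.map f * A.map f) := by
    simp only [sub_mul, mul_add, Matrix.smul_mul, Matrix.mul_smul, smul_smul,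
      Complex.I_mul_I, neg_one_smul]
    abel
  have h1 : (A.map f * A.map f + B.map f * B.map f)
      + Complex.I • (A.map f * B.map f) - Complex.I • (B.map f * A.map f) = 1 := by
    rw [← expand, ← hconj]
    conv_lhs => rw [show A.map ⇑f + Complex.I • B.map ⇑f = S from hS'.symm]
    exact hunit
  have hentry : ∀ i j, ((A * A) i j : ℂ) + ((B * B) i j : ℂ)
      + Complex.I * ((A * B) i j : ℂ) - Complex.I * ((B * A) i j : ℂ)
      = (1 : Matrix (Fin d) (Fin d) ℂ) i j := by
    intro i j
    have := congrFun (congrFun h1 i) j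
    simpa [← Matrix.map_mul, Matrix.add_apply, Matrix.sub_apply, Matrix.smul_apply,
      Matrix.map_apply, hfdef] using this
  have hABc : A * B = B * A := by
    ext i j
    have h := congrArg Complex.im (hentry i j)
    simp [Matrix.one_apply, apply_ite Complex.im] at h
    linarith
  have hA2B2 : A * A + B * B = 1 := by
    ext i j
    have h := congrArg Complex.re (hentry i j)
    simpa [Matrix.one_apply, apply_ite Complex.re] using h
  obtain ⟨Or, a, bb, hOO, hDA, hDB⟩ := jointDiag A B hAt hBt hABc
  have hOtO : Orᵀ * Or = 1 := mul_eq_one_comm.mp hOO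
  have hab : ∀ i, a i ^ 2 + bb i ^ 2 = 1 := by
    intro i
    have h2 : Matrix.diagonal a * Matrix.diagonal a + Matrix.diagonal bb * Matrix.diagonal bb
        = 1 := by
      rw [← hDA, ← hDB]
      calc Or * A * Orᵀ * (Or * A * Orᵀ) + Or * B * Orᵀ * (Or * B * Orᵀ)
          = Or * (A * (Orᵀ * Or) * A + B * (Orᵀ * Or) * B) * Orᵀ := by
            simp only [Matrix.mul_add, Matrix.add_mul, Matrix.mul_assoc]
        _ = Or * (A * A + B * B) * Orᵀ := by rw [hOtO]; simp [Matrix.mul_assoc]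
        _ = Or * Orᵀ := by rw [hA2B2, Matrix.mul_one]
        _ = 1 := hOO
    have := congrFun (congrFun h2 i) i
    simpa [Matrix.diagonal_mul_diagonal, Matrix.diagonal_apply, Matrix.one_apply, sq] using this
  have hdiag : Or.map f * S * (Or.map f)ᵀ
      = Matrix.diagonal (fun i => (a i : ℂ) + Complex.I * (bb i : ℂ)) := by
    rw [hS', Matrix.mul_add, Matrix.add_mul, Matrix.mul_smul, Matrix.smul_mul,
      ← Matrix.transpose_map, ← Matrix.map_mul, ← Matrix.map_mul, ← Matrix.map_mul,
      ← Matrix.map_mul, hDA, hDB, Matrix.diagonal_map f.map_zero, Matrix.diagonal_map f.map_zero]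
    ext i j
    rcases eq_or_ne i j with h | h
    · subst h; simp [hfdef]
    · simp [Matrix.diagonal_apply_ne _ h, hfdef]
  refine ⟨Or.map f, fun i j => by simp [hfdef, Matrix.map_apply], ?_, ?_, ?_⟩
  · rw [← Matrix.transpose_map, ← Matrix.map_mul, hOtO, Matrix.map_one f f.map_zero f.map_one]
  · rw [hdiag]; exact Matrix.isDiag_diagonal _
  · intro i
    rw [hdiag]
    simp only [Matrix.diagonal_apply_eq]
    rw [Complex.norm_def]
    have : Complex.normSq ((a i : ℂ) + Complex.I * (bb i : ℂ)) = 1 := by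
      simp [Complex.normSq_apply]
      nlinarith [hab i]
    rw [this, Real.sqrt_one]
end
end

section
/- Every two-qubit conjugation is LU-equivalent to its image under swapping the two qubits: for every 4×4 symmetric unitary complex matrix S there exist 2×2 unitary matrices U and V such that (U⊗V)·(P·S·Pᵀ)·(U⊗V)ᵀ = S, where P is the 4×4 swap permutation matrix acting on ℂ²⊗ℂ² ≅ ℂ⁴ by P·(x⊗y) = y⊗x. -/
open Matrix Kronecker

noncomputable section

/-- First qubit index of a two-qubit (Fin 4) index. -/
def q1 (i : Fin 4) : Fin 2 := ⟨i.val / 2, by have := i.isLt; omega⟩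
/-- Second qubit index of a two-qubit (Fin 4) index. -/
def q2 (i : Fin 4) : Fin 2 := ⟨i.val % 2, by have := i.isLt; omega⟩

/-- Kronecker product of two 2×2 matrices as a 4×4 matrix (row-major / computational
basis ordering 00, 01, 10, 11). -/
def kron2 (A B : Matrix (Fin 2) (Fin 2) ℂ) : Matrix (Fin 4) (Fin 4) ℂ :=
  Matrix.of fun i j => A (q1 i) (q1 j) * B (q2 i) (q2 j)

/-- The 4×4 swap permutation matrix: P·(x⊗y) = y⊗x. -/
def swapP : Matrix (Fin 4) (Fin 4) ℂ :=
  Matrix.of fun i j => if q1 i = q2 j ∧ q2 i = q1 j then 1 else 0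

/-- σy ⊗ σy as a real 4×4 matrix over ℂ. -/
def Emat : Matrix (Fin 4) (Fin 4) ℂ :=
  !![0,0,0,-1; 0,0,1,0; 0,1,0,0; -1,0,0,0]

lemma Emat_mul_Emat : Emat * Emat = 1 := by
  ext i j
  fin_cases i <;> fin_cases j <;>
    simp [Emat, Matrix.mul_apply, Fin.sum_univ_four, Matrix.one_apply, Matrix.vecHead, Matrix.vecTail]

lemma Emat_conjTranspose : Ematᴴ = Emat := by
  ext i j
  fin_cases i <;> fin_cases j <;> simp [Emat, Matrix.vecHead, Matrix.vecTail]

/-- Abstract reflection lemma: if S·conj(v) = v, Sᵀ = S, and v†v = t ≠ 0, then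
the reflection 1 - (2/t)vv† conjugates S to itself (congruence sense). -/
lemma reflection_fix (S : Matrix (Fin 4) (Fin 4) ℂ) (v : Fin 4 → ℂ) (t : ℂ)
    (hs : Sᵀ = S) (hv : S *ᵥ (star v) = v) (ht : dotProduct (star v) v = t)
    (ht0 : t ≠ 0) :
    (1 - (2/t) • vecMulVec v (star v)) * S * (1 - (2/t) • vecMulVec v (star v))ᵀ = S := by
  set N := vecMulVec v (star v) with hN
  set T := vecMulVec v v with hT
  set c : ℂ := 2/t with hc
  have hvj : ∀ j, ∑ k, S j k * star (v k) = v j := by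
    intro j
    have := congrFun hv j
    simpa [Matrix.mulVec, dotProduct] using this
  have hssym : ∀ k j, S k j = S j k := by
    intro k j; exact congrFun (congrFun hs j) k
  have htt : ∑ k, star (v k) * v k = t := by
    simpa [dotProduct] using ht
  have h1 : N * S = T := by
    ext i j
    simp only [hN, hT, Matrix.mul_apply, Matrix.vecMulVec_apply, Pi.star_apply]
    calc ∑ k, v i * star (v k) * S k j
        = v i * ∑ k, S j k * star (v k) := by
          rw [Finset.mul_sum]; congr 1; ext k; rw [hssym k j]; ring
      _ = v i * v j := by rw [hvj]
  have h2 : S * Nᵀ = T := by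
    ext i j
    simp only [hN, hT, Matrix.mul_apply, Matrix.transpose_apply, Matrix.vecMulVec_apply,
      Pi.star_apply]
    calc ∑ k, S i k * (v j * star (v k))
        = (∑ k, S i k * star (v k)) * v j := by
          rw [Finset.sum_mul]; congr 1; ext k; ring
      _ = v i * v j := by rw [hvj i]
  have h3 : T * Nᵀ = t • T := by
    ext i j
    simp only [hN, hT, Matrix.mul_apply, Matrix.transpose_apply, Matrix.vecMulVec_apply,
      Pi.star_apply, Matrix.smul_apply, smul_eq_mul]
    calc ∑ k, v i * v k * (v j * star (v k))
        = (∑ k, star (v k) * v k) * (v i * v j) := by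
          rw [Finset.sum_mul]; congr 1; ext k; ring
      _ = t * (v i * v j) := by rw [htt]
  have e1 : (1 - c • N)ᵀ = 1 - c • Nᵀ := by
    rw [Matrix.transpose_sub, Matrix.transpose_one, Matrix.transpose_smul]
  rw [e1, Matrix.sub_mul, Matrix.one_mul, Matrix.smul_mul, h1, Matrix.mul_sub, Matrix.mul_one,
    Matrix.sub_mul, Matrix.mul_smul, h2, Matrix.smul_mul, Matrix.mul_smul, h3]
  have hcc : c • (c • (t • T)) = c • T + c • T := by
    rw [smul_smul, smul_smul]
    rw [← add_smul]
    congr 1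
    have hct : c * t = 2 := by rw [hc]; field_simp
    linear_combination c * hct
  rw [hcc]
  abel

lemma dot_star_self (w : Fin 4 → ℂ) :
    dotProduct (star w) w = ((∑ i, Complex.normSq (w i) : ℝ) : ℂ) := by
  simp only [dotProduct, Pi.star_apply, Complex.ofReal_sum]
  congr 1
  funext i
  rw [show star (w i) = (starRingEnd ℂ) (w i) from rfl, ← Complex.normSq_eq_conj_mul_self]

lemma normSq_sum_pos {w : Fin 4 → ℂ} (h : w ≠ 0) : 0 < ∑ i, Complex.normSq (w i) := by
  obtain ⟨i, hi⟩ := Function.ne_iff.mp h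
  exact Finset.sum_pos' (fun j _ => Complex.normSq_nonneg _)
    ⟨i, Finset.mem_univ i, Complex.normSq_pos.mpr hi⟩

lemma dot_star_self_ne {w : Fin 4 → ℂ} (h : w ≠ 0) : dotProduct (star w) w ≠ 0 := by
  rw [dot_star_self]
  exact_mod_cast (normSq_sum_pos h).ne'

lemma Emat_map_star : Emat.map star = Emat := by
  ext i j
  fin_cases i <;> fin_cases j <;> simp [Emat, Matrix.vecHead, Matrix.vecTail]

lemma star_mulVec' (M : Matrix (Fin 4) (Fin 4) ℂ) (y : Fin 4 → ℂ) :
    star (M *ᵥ y) = (M.map star) *ᵥ (star y) := by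
  funext i
  simp [Matrix.mulVec, dotProduct, Matrix.map_apply, star_sum, star_mul']

lemma q1_0 : q1 0 = 0 := rfl
lemma q1_1 : q1 1 = 0 := rfl
lemma q1_2 : q1 2 = 1 := rfl
lemma q1_3 : q1 3 = 1 := rfl
lemma q2_0 : q2 0 = 0 := rfl
lemma q2_1 : q2 1 = 1 := rfl
lemma q2_2 : q2 2 = 0 := rfl
lemma q2_3 : q2 3 = 1 := rfl

lemma swapP_eq : swapP = !![1,0,0,0; 0,0,1,0; 0,1,0,0; 0,0,0,1] := by
  ext i j
  fin_cases i <;> fin_cases j <;>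
    norm_num [swapP, q1, q2, Fin.ext_iff, Matrix.vecHead, Matrix.vecTail]

set_option maxHeartbeats 1000000 in
lemma Cmat_unitary (a b m w : ℂ) (hm : (starRingEnd ℂ) m * m = 1)
    (hk : w * w * ((starRingEnd ℂ) a * a + (starRingEnd ℂ) b * b) = 1)
    (hw : (starRingEnd ℂ) w = w) :
    (w • !![b, -a; -(m * star a), -(m * star b)])ᴴ *
      (w • !![b, -a; -(m * star a), -(m * star b)]) = 1 := by
  ext i j
  fin_cases i <;> fin_cases j <;>
    simp only [Matrix.smul_apply, Matrix.conjTranspose_apply, Matrix.mul_apply,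
      Fin.sum_univ_two, Matrix.one_apply, Matrix.cons_val', Matrix.cons_val_zero,
      Matrix.cons_val_one, Matrix.head_cons, Matrix.head_fin_const, Matrix.empty_val',
      Matrix.cons_val_fin_one, smul_eq_mul, star_mul', star_neg, star_star,
      Fin.mk_zero, Fin.mk_one, Fin.isValue, ite_true, ite_false,
      show ((starRingEnd ℂ) : ℂ → ℂ) = star from rfl] <;>
    simp only [show (star : ℂ → ℂ) = (starRingEnd ℂ) from rfl, hw,
      Matrix.one_apply, Fin.isValue] <;>
    norm_num <;>
    first
      | ring1
      | linear_combination hk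
      | linear_combination (w * w * (starRingEnd ℂ) a * a) * hm + hk
      | linear_combination (w * w * (starRingEnd ℂ) b * b) * hm + hk
      | linear_combination (m * (starRingEnd ℂ) m) * hk + hm
      | linear_combination (w * w * a * (starRingEnd ℂ) b) * hm
      | linear_combination (w * w * (starRingEnd ℂ) a * b) * hm
      | linear_combination (-(w * w * a * (starRingEnd ℂ) b)) * hm
      | linear_combination (-(w * w * (starRingEnd ℂ) a * b)) * hm

set_option maxHeartbeats 1000000 in
lemma kron_reflection (a b m w : ℂ) (hm : (starRingEnd ℂ) m * m = 1)
    (hk : w * w * ((starRingEnd ℂ) a * a + (starRingEnd ℂ) b * b) = 1)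
    (hw : (starRingEnd ℂ) w = w) :
    kron2 (w • !![b, -a; -(m * star a), -(m * star b)])
        (w • !![b, -a; -(m * star a), -(m * star b)])ᴴ * swapP
      = 1 - (w * w) • vecMulVec ![a, b, m * star b, -(m * star a)]
          (star ![a, b, m * star b, -(m * star a)]) := by
  rw [swapP_eq]
  ext i j
  fin_cases i <;> fin_cases j <;>
    simp [kron2, q1, q2, Matrix.mul_apply, Fin.sum_univ_four, Matrix.conjTranspose_apply,
      Matrix.one_apply, Matrix.vecMulVec_apply, Matrix.vecHead, Matrix.vecTail,
      star_mul', star_neg, star_star, Fin.ext_iff,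
      show ((0:Fin 4):ℕ) = 0 from rfl, show ((1:Fin 4):ℕ) = 1 from rfl,
      show ((2:Fin 4):ℕ) = 2 from rfl, show ((3:Fin 4):ℕ) = 3 from rfl,
      show (star : ℂ → ℂ) = (starRingEnd ℂ) from rfl, hw, -Matrix.cons_vecMulVec] <;>
    first
      | ring1
      | linear_combination hk
      | linear_combination (m * (starRingEnd ℂ) m) * hk + hm
      | linear_combination hm
      | linear_combination (-1 : ℂ) * hm
      | linear_combination (m * (starRingEnd ℂ) m) * hk - hm
      | linear_combination (w * w * a * (starRingEnd ℂ) b) * hm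
      | linear_combination (w * w * (starRingEnd ℂ) a * b) * hm
      | linear_combination (-(w * w * a * (starRingEnd ℂ) b)) * hm
      | linear_combination (-(w * w * (starRingEnd ℂ) a * b)) * hm

theorem stmt4 (S : Matrix (Fin 4) (Fin 4) ℂ) (hs : Sᵀ = S) (hu : Sᴴ * S = 1) :
    ∃ U V : Matrix (Fin 2) (Fin 2) ℂ, Uᴴ * U = 1 ∧ Vᴴ * V = 1 ∧
      kron2 U V * (swapP * S * swapPᵀ) * (kron2 U V)ᵀ = S := by
  have hSS' : S * Sᴴ = 1 := mul_eq_one_comm.mp hu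
  have hmapS : S.map star = Sᴴ := by
    ext i j
    rw [Matrix.conjTranspose_apply, Matrix.map_apply]
    show star (S i j) = star (S j i)
    exact congrArg star ((congrFun (congrFun hs j) i : Sᵀ j i = S j i))
  -- the conjugation θ x = S ∘ star x is an involution
  have hθθ : ∀ x : Fin 4 → ℂ, S *ᵥ star (S *ᵥ star x) = x := by
    intro x
    rw [star_mulVec' S (star x), hmapS, star_star, Matrix.mulVec_mulVec, hSS',
      Matrix.one_mulVec]
  set A : Matrix (Fin 4) (Fin 4) ℂ := S * Emat with hA
  have hAunit : Aᴴ * A = 1 := by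
    rw [hA, Matrix.conjTranspose_mul, Matrix.mul_assoc, ← Matrix.mul_assoc Sᴴ S Emat,
      hu, Matrix.one_mul, Emat_conjTranspose, Emat_mul_Emat]
  -- eigenvector of A
  obtain ⟨μ, hμ⟩ := Module.End.exists_eigenvalue (Matrix.mulVecLin A)
  obtain ⟨u, hu1⟩ := hμ.exists_hasEigenvector
  have hne : u ≠ 0 := hu1.2
  have hAu : A *ᵥ u = μ • u := by
    have := hu1.apply_eq_smul
    simpa [Matrix.mulVecLin_apply] using this
  -- |μ| = 1
  have huu0 : dotProduct (star u) u ≠ 0 := dot_star_self_ne hne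
  have hmu : star μ * μ = 1 := by
    have e1 : dotProduct (star (A *ᵥ u)) (A *ᵥ u) = dotProduct (star u) u := by
      rw [Matrix.star_mulVec, Matrix.dotProduct_mulVec, Matrix.vecMul_vecMul, hAunit,
        Matrix.vecMul_one]
    rw [hAu] at e1
    rw [star_smul, smul_dotProduct, dotProduct_smul] at e1
    have h2 : (star μ * μ) * dotProduct (star u) u
        = 1 * dotProduct (star u) u := by
      rw [one_mul]
      simpa [smul_smul, smul_eq_mul, mul_assoc] using e1
    exact mul_right_cancel₀ huu0 h2
  -- the eigenspace is θ-invariant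
  have hSmulV : ∀ x : Fin 4 → ℂ, S *ᵥ (Sᴴ *ᵥ x) = x := by
    intro x
    rw [Matrix.mulVec_mulVec, hSS', Matrix.one_mulVec]
  have hSHmulV : ∀ x : Fin 4 → ℂ, Sᴴ *ᵥ (S *ᵥ x) = x := by
    intro x
    rw [Matrix.mulVec_mulVec, hu, Matrix.one_mulVec]
  have hAθu : A *ᵥ (S *ᵥ star u) = μ • (S *ᵥ star u) := by
    have hSEu : S *ᵥ (Emat *ᵥ u) = μ • u := by
      rw [Matrix.mulVec_mulVec]; exact hAu
    have hstar1 : Sᴴ *ᵥ (Emat *ᵥ star u) = star μ • star u := by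
      have := congrArg star hSEu
      rwa [star_mulVec' S (Emat *ᵥ u), hmapS, star_mulVec' Emat u, Emat_map_star,
        star_smul] at this
    have hE2 : Emat *ᵥ star u = star μ • (S *ᵥ star u) := by
      have := congrArg (fun x => S *ᵥ x) hstar1
      simpa [Matrix.mulVec_mulVec, ← Matrix.mul_assoc, hSS', Matrix.one_mul, Matrix.mulVec_smul] using this
    have hESu : Emat *ᵥ (S *ᵥ star u) = μ • star u := by
      have := congrArg (fun x => μ • (Emat *ᵥ x)) hE2
      simp only [Matrix.mulVec_smul, Matrix.mulVec_mulVec, Emat_mul_Emat,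
        Matrix.one_mulVec, smul_smul] at this
      rw [mul_comm] at this
      rw [hmu, one_smul] at this
      rw [Matrix.mulVec_mulVec]
      exact this.symm
    show (S * Emat) *ᵥ (S *ᵥ star u) = μ • (S *ᵥ star u)
    rw [← Matrix.mulVec_mulVec, hESu, Matrix.mulVec_smul]
  -- pick a θ-fixed eigenvector v
  obtain ⟨v, hvne, hθv, hAv⟩ :
      ∃ v : Fin 4 → ℂ, v ≠ 0 ∧ S *ᵥ star v = v ∧ A *ᵥ v = μ • v := by
    by_cases hcase : u + S *ᵥ star u = 0
    · refine ⟨Complex.I • (u - S *ᵥ star u), ?_, ?_, ?_⟩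
      · have h2u : u - S *ᵥ star u = (2 : ℂ) • u := by
          have : S *ᵥ star u = -u := by
            have := hcase
            linear_combination (norm := module) this
          rw [this]; module
        rw [h2u, smul_smul]
        simp [hne, smul_eq_zero, Complex.I_ne_zero]
      · rw [star_smul, star_sub, Matrix.mulVec_smul, Matrix.mulVec_sub]
        rw [hθθ u]
        simp only [Complex.star_def, Complex.conj_I]
        module
      · rw [Matrix.mulVec_smul, Matrix.mulVec_sub, hAu, hAθu]
        module
    · refine ⟨u + S *ᵥ star u, hcase, ?_, ?_⟩
      · rw [star_add, Matrix.mulVec_add, hθθ u]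
        abel
      · rw [Matrix.mulVec_add, hAu, hAθu, smul_add]
  -- E v = μ star v
  have hEv : Emat *ᵥ v = μ • star v := by
    have h1 : S *ᵥ (Emat *ᵥ v) = μ • v := by
      rw [Matrix.mulVec_mulVec]; exact hAv
    have h2 : Sᴴ *ᵥ v = star v := by
      have := congrArg star hθv
      rwa [star_mulVec' S (star v), hmapS, star_star] at this
    have := congrArg (fun x => Sᴴ *ᵥ x) h1
    simpa [Matrix.mulVec_mulVec, ← Matrix.mul_assoc, hu, Matrix.one_mul, Matrix.mulVec_smul, h2] using this
  -- entry relations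
  have hv2 : v 2 = μ * star (v 1) := by
    have := congrFun hEv 1
    simpa [Emat, Matrix.mulVec, dotProduct, Fin.sum_univ_four,
      Matrix.vecHead, Matrix.vecTail] using this
  have hv3 : v 3 = -(μ * star (v 0)) := by
    have := congrFun hEv 0
    have h' : -(v 3) = μ * star (v 0) := by
      simpa [Emat, Matrix.mulVec, dotProduct, Fin.sum_univ_four,
        Matrix.vecHead, Matrix.vecTail] using this
    exact neg_eq_iff_eq_neg.mp h'
  -- normalization
  set tR : ℝ := ∑ i, Complex.normSq (v i) with htRdef
  have htR : dotProduct (star v) v = ((tR : ℝ) : ℂ) := dot_star_self v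
  have htRpos : 0 < tR := normSq_sum_pos hvne
  have htRne : ((tR : ℝ) : ℂ) ≠ 0 := by exact_mod_cast htRpos.ne'
  set s : ℝ := Real.sqrt (2/tR) with hsdef
  have hss : ((s:ℝ):ℂ) * ((s:ℝ):ℂ) = 2/((tR:ℝ):ℂ) := by
    rw [← Complex.ofReal_mul, Real.mul_self_sqrt (by positivity)]
    push_cast
    ring
  have httR2 : ((tR:ℝ):ℂ) = 2*(star (v 0) * v 0 + star (v 1) * v 1) := by
    have h1 := htR.symm
    simp only [dotProduct, Fin.sum_univ_four, Pi.star_apply] at h1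
    rw [h1, hv2, hv3]
    simp only [star_mul', star_neg, star_star]
    linear_combination (v 1 * star (v 1) + v 0 * star (v 0)) * hmu
  have hXne : (star (v 0) * v 0 + star (v 1) * v 1) ≠ 0 := by
    intro h
    apply htRne
    rw [httR2, h, mul_zero]
  have hkey : ((s:ℝ):ℂ) * ((s:ℝ):ℂ) * (star (v 0) * v 0 + star (v 1) * v 1) = 1 := by
    rw [hss, httR2]
    field_simp
  set C : Matrix (Fin 2) (Fin 2) ℂ :=
    ((s:ℝ):ℂ) • !![v 1, -(v 0); -(μ * star (v 0)), -(μ * star (v 1))] with hCdef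
  have hwreal : star (((s:ℝ):ℂ)) = ((s:ℝ):ℂ) := by
    rw [show star (((s:ℝ):ℂ)) = (starRingEnd ℂ) ((s:ℝ):ℂ) from rfl, Complex.conj_ofReal]
  have hC : Cᴴ * C = 1 := by
    rw [hCdef]
    exact Cmat_unitary (v 0) (v 1) μ ((s:ℝ):ℂ) hmu hkey hwreal
  have hveq : v = ![v 0, v 1, μ * star (v 1), -(μ * star (v 0))] := by
    funext i
    fin_cases i <;> simp [hv2, hv3]
  have hKP : kron2 C Cᴴ * swapP
      = 1 - (((s:ℝ):ℂ) * ((s:ℝ):ℂ)) • vecMulVec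
          (![v 0, v 1, μ * star (v 1), -(μ * star (v 0))])
          (star ![v 0, v 1, μ * star (v 1), -(μ * star (v 0))]) := by
    rw [hCdef]
    exact kron_reflection (v 0) (v 1) μ ((s:ℝ):ℂ) hmu hkey hwreal
  have hθv' : S *ᵥ star (![v 0, v 1, μ * star (v 1), -(μ * star (v 0))])
      = ![v 0, v 1, μ * star (v 1), -(μ * star (v 0))] := by
    rw [← hveq]; exact hθv
  have htR' : dotProduct (star ![v 0, v 1, μ * star (v 1), -(μ * star (v 0))])
      (![v 0, v 1, μ * star (v 1), -(μ * star (v 0))]) = ((tR:ℝ):ℂ) := by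
    rw [← hveq]; exact htR
  refine ⟨C, Cᴴ, hC, ?_, ?_⟩
  · rw [Matrix.conjTranspose_conjTranspose]
    exact mul_eq_one_comm.mp hC
  · have assoc : kron2 C Cᴴ * (swapP * S * swapPᵀ) * (kron2 C Cᴴ)ᵀ
        = (kron2 C Cᴴ * swapP) * S * (kron2 C Cᴴ * swapP)ᵀ := by
      rw [Matrix.transpose_mul]
      simp only [Matrix.mul_assoc]
    rw [assoc, hKP]
    have h2t : (((s:ℝ):ℂ) * ((s:ℝ):ℂ)) • vecMulVec
          (![v 0, v 1, μ * star (v 1), -(μ * star (v 0))])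
          (star ![v 0, v 1, μ * star (v 1), -(μ * star (v 0))])
        = (2/((tR:ℝ):ℂ)) • vecMulVec
          (![v 0, v 1, μ * star (v 1), -(μ * star (v 0))])
          (star ![v 0, v 1, μ * star (v 1), -(μ * star (v 0))]) := by rw [hss]
    rw [h2t]
    exact reflection_fix S (![v 0, v 1, μ * star (v 1), -(μ * star (v 0))])
      ((tR:ℝ):ℂ) hs hθv' htR' htRne
end
end

section
/- Let S be a symmetric unitary complex matrix on N-tuple indices representing a Prod-measurable conjugation, i.e. suppose there exist unitary matrices U_p (d_p×d_p) such that (⊗_p U_p)·S·(⊗_p U_p)ᵀ is diagonal. Then there exist unitary matrices V^p (d_p×d_p, p = 1,…,N) such that: (a) for each p, V^p·tr_{¬p}(S)·(V^p)ᵀ is diagonal with nonnegative real entries (so V^p realizes an Autonne–Takagi factorization of the partial trace tr_{¬p}(S)), and (b) (⊗_p V^p)·S·(⊗_p V^p)ᵀ is diagonal. -/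
open Matrix Kronecker

noncomputable section

/-- N-fold Kronecker product of matrices, on dependent-tuple indices. -/
def nKron {N : ℕ} {ι : Fin N → Type} (A : ∀ p, Matrix (ι p) (ι p) ℂ) :
    Matrix (∀ p, ι p) (∀ p, ι p) ℂ :=
  Matrix.of fun i j => ∏ p, A p (i p) (j p)

/-- Partial trace over all subsystems except `p`. -/
def ptrace {N : ℕ} {d : Fin N → ℕ} (S : Matrix (∀ p, Fin (d p)) (∀ p, Fin (d p)) ℂ)
    (p : Fin N) : Matrix (Fin (d p)) (Fin (d p)) ℂ :=
  Matrix.of fun a b =>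
    ∑ k : ∀ q, Fin (d q), if k p = a then S k (Function.update k p b) else 0

section Aux

variable {N : ℕ} {d : Fin N → ℕ}

lemma nKron_mul (A B : ∀ p, Matrix (Fin (d p)) (Fin (d p)) ℂ) :
    nKron A * nKron B = nKron (fun p => A p * B p) := by
  ext i j
  simp only [nKron, Matrix.mul_apply, Matrix.of_apply, ← Finset.prod_mul_distrib]
  rw [Finset.prod_univ_sum, Fintype.piFinset_univ]

lemma nKron_transpose (A : ∀ p, Matrix (Fin (d p)) (Fin (d p)) ℂ) :
    (nKron A)ᵀ = nKron (fun p => (A p)ᵀ) := by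
  ext i j; simp [nKron]

lemma nKron_conjTranspose (A : ∀ p, Matrix (Fin (d p)) (Fin (d p)) ℂ) :
    (nKron A)ᴴ = nKron (fun p => (A p)ᴴ) := by
  ext i j; simp [nKron, conjTranspose_apply, map_prod]

lemma nKron_one : nKron (fun p => (1 : Matrix (Fin (d p)) (Fin (d p)) ℂ)) = 1 := by
  ext i j
  simp only [nKron, Matrix.of_apply, Matrix.one_apply]
  by_cases h : i = j
  · subst h; simp
  · rw [if_neg h]
    obtain ⟨q, hq⟩ := Function.ne_iff.mp h
    exact Finset.prod_eq_zero (Finset.mem_univ q) (by simp [hq])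

lemma nKron_isDiag {A : ∀ p, Matrix (Fin (d p)) (Fin (d p)) ℂ}
    (hA : ∀ p, (A p).IsDiag) : (nKron A).IsDiag := by
  intro i j hij
  obtain ⟨q, hq⟩ := Function.ne_iff.mp hij
  exact Finset.prod_eq_zero (Finset.mem_univ q) (hA q hq)

lemma isDiag_mul {n : Type*} [Fintype n] [DecidableEq n] {A B : Matrix n n ℂ}
    (hA : A.IsDiag) (hB : B.IsDiag) : (A * B).IsDiag := by
  intro i j hij
  rw [Matrix.mul_apply]
  refine Finset.sum_eq_zero fun k _ => ?_
  by_cases hk : i = k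
  · subst hk; rw [hB hij, mul_zero]
  · rw [hA hk, zero_mul]

def phase (z : ℂ) : ℂ := Complex.exp ((↑(-z.arg / 2) : ℂ) * Complex.I)

lemma phase_conj_mul (z : ℂ) : (starRingEnd ℂ) (phase z) * phase z = 1 := by
  have h1 : ‖phase z‖ = 1 := Complex.norm_exp_ofReal_mul_I _
  have := Complex.normSq_eq_norm_sq (phase z)
  rw [h1] at this
  rw [mul_comm, Complex.mul_conj, this]
  norm_num

lemma phase_sq_mul (z : ℂ) : phase z * phase z * z = (‖z‖ : ℂ) := by
  have h := Complex.norm_mul_exp_arg_mul_I z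
  set t := z.arg with ht
  rw [phase, ← Complex.exp_add, ← ht]
  have h2 : (↑(-t / 2) : ℂ) * Complex.I + (↑(-t / 2) : ℂ) * Complex.I
      = -(↑t * Complex.I) := by push_cast; ring
  rw [h2, ← h, mul_comm (↑‖z‖ : ℂ), ← mul_assoc, ← Complex.exp_add]
  simp

lemma core (p : Fin N) (h : ∀ q, Fin (d q) → ℂ) (a b : Fin (d p)) :
    (∑ k : ∀ q, Fin (d q),
        if k p = a then (∏ q, h q (k q)) * ∏ q, h q (Function.update k p b q) else 0)
      = h p a * h p b * ∏ q ∈ Finset.univ.erase p, (∑ y, (h q y) ^ 2) := by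
  set G : ∀ q, Fin (d q) → ℂ :=
    Function.update (fun q x => (h q x) ^ 2) p (fun x => if x = a then h p a * h p b else 0)
    with hG
  have step1 : ∀ k : ∀ q, Fin (d q),
      (if k p = a then (∏ q, h q (k q)) * ∏ q, h q (Function.update k p b q) else 0)
        = ∏ q, G q (k q) := by
    intro k
    rw [← Finset.mul_prod_erase Finset.univ (fun q => G q (k q)) (Finset.mem_univ p)]
    have hGp : G p (k p) = if k p = a then h p a * h p b else 0 := by
      rw [hG, Function.update_self]
    have hGq : (∏ q ∈ Finset.univ.erase p, G q (k q))
        = ∏ q ∈ Finset.univ.erase p, (h q (k q)) ^ 2 :=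
      Finset.prod_congr rfl fun q hq => by
        rw [hG, Function.update_of_ne (Finset.ne_of_mem_erase hq)]
    by_cases hk : k p = a
    · rw [hGp, if_pos hk, if_pos hk, hGq]
      have e1 : (∏ q, h q (k q))
          = h p a * ∏ q ∈ Finset.univ.erase p, h q (k q) := by
        rw [← Finset.mul_prod_erase Finset.univ (fun q => h q (k q)) (Finset.mem_univ p), hk]
      have e2 : (∏ q, h q (Function.update k p b q))
          = h p b * ∏ q ∈ Finset.univ.erase p, h q (k q) := by
        rw [← Finset.mul_prod_erase Finset.univ (fun q => h q (Function.update k p b q))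
          (Finset.mem_univ p), Function.update_self]
        congr 1
        exact Finset.prod_congr rfl fun q hq => by
          rw [Function.update_of_ne (Finset.ne_of_mem_erase hq)]
      have e3 : (∏ q ∈ Finset.univ.erase p, (h q (k q)) ^ 2)
          = (∏ q ∈ Finset.univ.erase p, h q (k q)) * ∏ q ∈ Finset.univ.erase p, h q (k q) := by
        rw [← Finset.prod_mul_distrib]
        exact Finset.prod_congr rfl fun _ _ => sq _
      rw [e1, e2, e3]
      ring
    · rw [hGp, if_neg hk, if_neg hk, zero_mul]
  rw [Finset.sum_congr rfl (fun k _ => step1 k)]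
  rw [← Fintype.piFinset_univ, ← Finset.prod_univ_sum]
  rw [← Finset.mul_prod_erase Finset.univ (fun q => ∑ x, G q x) (Finset.mem_univ p)]
  congr 1
  · rw [hG]; simp [Finset.sum_ite_eq']
  · refine Finset.prod_congr rfl fun q hq => Finset.sum_congr rfl fun x _ => ?_
    rw [hG, Function.update_of_ne (Finset.ne_of_mem_erase hq)]

/-- diagonal entries data for the partial trace -/
def fdiag (S : Matrix (∀ p, Fin (d p)) (∀ p, Fin (d p)) ℂ)
    (U : ∀ p, Matrix (Fin (d p)) (Fin (d p)) ℂ) (p : Fin N) (α : Fin (d p)) : ℂ :=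
  ∑ m : ∀ q, Fin (d q), if m p = α then
    (nKron U * S * (nKron U)ᵀ) m m *
      ∏ q ∈ Finset.univ.erase p, (∑ y, ((starRingEnd ℂ) (U q (m q) y)) ^ 2)
    else 0

lemma ptrace_eq (S : Matrix (∀ p, Fin (d p)) (∀ p, Fin (d p)) ℂ)
    (U : ∀ p, Matrix (Fin (d p)) (Fin (d p)) ℂ) (hU : ∀ p, (U p)ᴴ * U p = 1)
    (hM : (nKron U * S * (nKron U)ᵀ).IsDiag) (p : Fin N) :
    ptrace S p = (U p)ᴴ * Matrix.diagonal (fdiag S U p) * ((U p)ᴴ)ᵀ := by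
  set W := nKron U with hW
  set M := W * S * Wᵀ with hMdef
  set g : (∀ q, Fin (d q)) → ℂ := fun m => M m m with hg
  have hWU : Wᴴ * W = 1 := by
    rw [hW, nKron_conjTranspose, nKron_mul, funext hU, nKron_one]
  have h1 : Wᵀ * (Wᴴ)ᵀ = 1 := by
    rw [← Matrix.transpose_mul, hWU, Matrix.transpose_one]
  have hMd : M = Matrix.diagonal g := by
    ext i j
    by_cases hij : i = j
    · subst hij; rw [Matrix.diagonal_apply_eq]
    · rw [Matrix.diagonal_apply_ne _ hij]; exact hM hij
  have hS2 : S = Wᴴ * Matrix.diagonal g * (Wᴴ)ᵀ := by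
    rw [← hMd]
    calc S = (Wᴴ * W) * S * (Wᵀ * (Wᴴ)ᵀ) := by
            rw [hWU, h1, Matrix.one_mul, Matrix.mul_one]
      _ = Wᴴ * M * (Wᴴ)ᵀ := by rw [hMdef]; simp only [Matrix.mul_assoc]
  have hS3 : ∀ k l, S k l = ∑ m, (starRingEnd ℂ) (W m k) * (g m * (starRingEnd ℂ) (W m l)) := by
    intro k l
    conv_lhs => rw [hS2]
    rw [Matrix.mul_apply]
    simp only [Matrix.mul_diagonal, Matrix.conjTranspose_apply, Matrix.transpose_apply,
      RCLike.star_def, mul_assoc]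
  ext a b
  show (∑ k : ∀ q, Fin (d q), if k p = a then S k (Function.update k p b) else 0) = _
  have rhs : ((U p)ᴴ * Matrix.diagonal (fdiag S U p) * ((U p)ᴴ)ᵀ) a b
      = ∑ α, (starRingEnd ℂ) (U p α a) * (fdiag S U p α * (starRingEnd ℂ) (U p α b)) := by
    rw [Matrix.mul_apply]
    simp only [Matrix.mul_diagonal, Matrix.conjTranspose_apply, Matrix.transpose_apply,
      RCLike.star_def, mul_assoc]
  rw [rhs]
  calc (∑ k : ∀ q, Fin (d q), if k p = a then S k (Function.update k p b) else 0)
      = ∑ k : ∀ q, Fin (d q), ∑ m, if k p = a then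
          (starRingEnd ℂ) (W m k) * (g m * (starRingEnd ℂ) (W m (Function.update k p b)))
          else 0 := by
        refine Finset.sum_congr rfl fun k _ => ?_
        split_ifs with hk
        · rw [hS3]
        · simp
    _ = ∑ m, ∑ k : ∀ q, Fin (d q), if k p = a then
          (starRingEnd ℂ) (W m k) * (g m * (starRingEnd ℂ) (W m (Function.update k p b)))
          else 0 := Finset.sum_comm
    _ = ∑ m, g m * ∑ k : ∀ q, Fin (d q), if k p = a then
          (∏ q, (starRingEnd ℂ) (U q (m q) (k q))) *
            ∏ q, (starRingEnd ℂ) (U q (m q) (Function.update k p b q))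
          else 0 := by
        refine Finset.sum_congr rfl fun m _ => ?_
        rw [Finset.mul_sum]
        refine Finset.sum_congr rfl fun k _ => ?_
        split_ifs with hk
        · rw [hW]
          simp only [nKron, Matrix.of_apply, map_prod]
          ring
        · rw [mul_zero]
    _ = ∑ m, g m * ((starRingEnd ℂ) (U p (m p) a) * (starRingEnd ℂ) (U p (m p) b) *
          ∏ q ∈ Finset.univ.erase p, (∑ y, ((starRingEnd ℂ) (U q (m q) y)) ^ 2)) := by
        refine Finset.sum_congr rfl fun m _ => ?_
        rw [core p (fun q x => (starRingEnd ℂ) (U q (m q) x)) a b]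
    _ = ∑ m, ∑ α, if m p = α then
          (starRingEnd ℂ) (U p α a) * ((g m *
            ∏ q ∈ Finset.univ.erase p, (∑ y, ((starRingEnd ℂ) (U q (m q) y)) ^ 2)) *
            (starRingEnd ℂ) (U p α b)) else 0 := by
        refine Finset.sum_congr rfl fun m _ => ?_
        rw [Finset.sum_ite_eq, if_pos (Finset.mem_univ _)]
        ring
    _ = ∑ α, ∑ m, if m p = α then
          (starRingEnd ℂ) (U p α a) * ((g m *
            ∏ q ∈ Finset.univ.erase p, (∑ y, ((starRingEnd ℂ) (U q (m q) y)) ^ 2)) *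
            (starRingEnd ℂ) (U p α b)) else 0 := Finset.sum_comm
    _ = ∑ α, (starRingEnd ℂ) (U p α a) * (fdiag S U p α * (starRingEnd ℂ) (U p α b)) := by
        refine Finset.sum_congr rfl fun α _ => ?_
        simp only [fdiag, ← hW, ← hMdef, ← hg]
        rw [Finset.sum_mul, Finset.mul_sum]
        refine Finset.sum_congr rfl fun m _ => ?_
        split_ifs with hm
        · ring
        · simp

end Aux

theorem stmt7 {N : ℕ} {d : Fin N → ℕ}
    (S : Matrix (∀ p, Fin (d p)) (∀ p, Fin (d p)) ℂ) (hs : Sᵀ = S) (hu : Sᴴ * S = 1)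
    (hprod : ∃ U : ∀ p, Matrix (Fin (d p)) (Fin (d p)) ℂ,
      (∀ p, (U p)ᴴ * U p = 1) ∧ (nKron U * S * (nKron U)ᵀ).IsDiag) :
    ∃ V : ∀ p, Matrix (Fin (d p)) (Fin (d p)) ℂ,
      (∀ p, (V p)ᴴ * V p = 1) ∧
      (∀ p, (V p * ptrace S p * (V p)ᵀ).IsDiag ∧
        ∀ a, ∃ r : ℝ, 0 ≤ r ∧ (V p * ptrace S p * (V p)ᵀ) a a = (r : ℂ)) ∧
      (nKron V * S * (nKron V)ᵀ).IsDiag := by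
  obtain ⟨U, hU, hM⟩ := hprod
  have hUUH : ∀ p, U p * (U p)ᴴ = 1 := fun p => mul_eq_one_comm.mp (hU p)
  set f : ∀ p, Fin (d p) → ℂ := fdiag S U with hf
  set θ : ∀ p, Fin (d p) → ℂ := fun p α => phase (f p α) with hθ
  set V : ∀ p, Matrix (Fin (d p)) (Fin (d p)) ℂ :=
    fun p => Matrix.diagonal (θ p) * U p with hV
  have hT : ∀ p, U p * ptrace S p * (U p)ᵀ = Matrix.diagonal (f p) := by
    intro p
    rw [ptrace_eq S U hU hM p]
    have htr : ((U p)ᴴ)ᵀ * (U p)ᵀ = 1 := by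
      rw [← Matrix.transpose_mul, hUUH p, Matrix.transpose_one]
    calc U p * ((U p)ᴴ * Matrix.diagonal (f p) * ((U p)ᴴ)ᵀ) * (U p)ᵀ
        = (U p * (U p)ᴴ) * Matrix.diagonal (f p) * (((U p)ᴴ)ᵀ * (U p)ᵀ) := by
          simp only [Matrix.mul_assoc]
      _ = Matrix.diagonal (f p) := by
          rw [hUUH p, htr, Matrix.one_mul, Matrix.mul_one]
  have hVT : ∀ p, V p * ptrace S p * (V p)ᵀ
      = Matrix.diagonal (fun α => (‖f p α‖ : ℂ)) := by
    intro p
    rw [hV]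
    calc Matrix.diagonal (θ p) * U p * ptrace S p * (Matrix.diagonal (θ p) * U p)ᵀ
        = Matrix.diagonal (θ p) * (U p * ptrace S p * (U p)ᵀ) * Matrix.diagonal (θ p) := by
          rw [Matrix.transpose_mul, Matrix.diagonal_transpose]
          simp only [Matrix.mul_assoc]
      _ = Matrix.diagonal (fun α => θ p α * f p α * θ p α) := by
          rw [hT p, Matrix.diagonal_mul_diagonal, Matrix.diagonal_mul_diagonal]
      _ = Matrix.diagonal (fun α => (‖f p α‖ : ℂ)) := by
          refine congrArg Matrix.diagonal (funext fun α => ?_)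
          show phase (f p α) * f p α * phase (f p α) = (‖f p α‖ : ℂ)
          rw [mul_right_comm, phase_sq_mul]
  refine ⟨V, fun p => ?_, fun p => ⟨?_, fun a => ?_⟩, ?_⟩
  · rw [hV, Matrix.conjTranspose_mul, Matrix.diagonal_conjTranspose]
    calc (U p)ᴴ * Matrix.diagonal (star (θ p)) * (Matrix.diagonal (θ p) * U p)
        = (U p)ᴴ * ((Matrix.diagonal (star (θ p)) * Matrix.diagonal (θ p)) * U p) := by
          simp only [Matrix.mul_assoc]
      _ = 1 := by
          rw [Matrix.diagonal_mul_diagonal]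
          have h2 : (fun i => star (θ p) i * θ p i) = fun _ => (1 : ℂ) :=
            funext fun α => by simpa using phase_conj_mul (f p α)
          rw [h2, Matrix.diagonal_one, Matrix.one_mul, hU p]
  · rw [hVT p]; exact Matrix.isDiag_diagonal _
  · refine ⟨‖f p a‖, norm_nonneg _, ?_⟩
    rw [hVT p, Matrix.diagonal_apply_eq]
  · have hNK : nKron V = nKron (fun p => Matrix.diagonal (θ p)) * nKron U := by
      rw [nKron_mul]
    rw [hNK, Matrix.transpose_mul]
    have : nKron (fun p => Matrix.diagonal (θ p)) * nKron U * S *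
          ((nKron U)ᵀ * (nKron (fun p => Matrix.diagonal (θ p)))ᵀ)
        = nKron (fun p => Matrix.diagonal (θ p)) * (nKron U * S * (nKron U)ᵀ) *
          (nKron (fun p => Matrix.diagonal (θ p)))ᵀ := by
      simp only [Matrix.mul_assoc]
    rw [this]
    have hKdiag : (nKron (fun p => Matrix.diagonal (θ p))).IsDiag :=
      nKron_isDiag fun p => Matrix.isDiag_diagonal _
    exact isDiag_mul (isDiag_mul hKdiag hM) hKdiag.transpose
end
end

section
/- Let σX = [[0, 1], [1, 0]], σY = [[0, −i], [i, 0]], σZ = [[1, 0], [0, −1]], and for K ∈ {X, Y, Z} set G_K = σK⊗1 + 1⊗σK (a 4×4 matrix, ⊗ the Kronecker product). A 4×4 symmetric unitary complex matrix S satisfies S·conj(G_X) = −G_X·S and S·conj(G_Z) = −G_Z·S if and only if there exist c ∈ ℂ with |c| = 1 and α ∈ ℝ such that S = c·S_α, where (rows and columns ordered 00, 01, 10, 11) S_α = [[0, 0, 0, 1], [0, −e^{iα}·cos α, i·e^{iα}·sin α, 0], [0, i·e^{iα}·sin α, −e^{iα}·cos α, 0], [1, 0, 0, 0]]. Moreover,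 every such S additionally satisfies S·conj(G_Y) = −G_Y·S (since conj(G_Y) = −G_Y, this says S commutes with G_Y), so every solution for the two-dimensional field condition is also a solution for the three-dimensional field condition. -/
open Matrix Kronecker

noncomputable section

def sigmaX : Matrix (Fin 2) (Fin 2) ℂ := !![0, 1; 1, 0]
def sigmaY : Matrix (Fin 2) (Fin 2) ℂ := !![0, -Complex.I; Complex.I, 0]
def sigmaZ : Matrix (Fin 2) (Fin 2) ℂ := !![1, 0; 0, -1]

def GX : Matrix (Fin 4) (Fin 4) ℂ := kron2 sigmaX 1 + kron2 1 sigmaX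
def GY : Matrix (Fin 4) (Fin 4) ℂ := kron2 sigmaY 1 + kron2 1 sigmaY
def GZ : Matrix (Fin 4) (Fin 4) ℂ := kron2 sigmaZ 1 + kron2 1 sigmaZ

def Salpha (α : ℝ) : Matrix (Fin 4) (Fin 4) ℂ :=
  !![0, 0, 0, 1;
     0, -(Complex.exp ((α : ℂ) * Complex.I) * (Real.cos α : ℂ)),
        Complex.I * Complex.exp ((α : ℂ) * Complex.I) * (Real.sin α : ℂ), 0;
     0, Complex.I * Complex.exp ((α : ℂ) * Complex.I) * (Real.sin α : ℂ),
        -(Complex.exp ((α : ℂ) * Complex.I) * (Real.cos α : ℂ)), 0;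
     1, 0, 0, 0]

lemma GX_eq : GX = !![0,1,1,0; 1,0,0,1; 1,0,0,1; 0,1,1,0] := by
  ext i j
  fin_cases i <;> fin_cases j <;>
    norm_num [GX, kron2, sigmaX, q1, q2, Matrix.one_apply, Fin.ext_iff,
      Matrix.vecHead, Matrix.vecTail]

lemma GY_eq : GY = !![0,-Complex.I,-Complex.I,0; Complex.I,0,0,-Complex.I;
    Complex.I,0,0,-Complex.I; 0,Complex.I,Complex.I,0] := by
  ext i j
  fin_cases i <;> fin_cases j <;>
    norm_num [GY, kron2, sigmaY, q1, q2, Matrix.one_apply, Fin.ext_iff,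
      Matrix.vecHead, Matrix.vecTail]

lemma GZ_eq : GZ = !![2,0,0,0; 0,0,0,0; 0,0,0,0; 0,0,0,-2] := by
  ext i j
  fin_cases i <;> fin_cases j <;>
    norm_num [GZ, kron2, sigmaZ, q1, q2, Matrix.one_apply, Fin.ext_iff,
      Matrix.vecHead, Matrix.vecTail]

lemma GXmap : GX.map (starRingEnd ℂ) = GX := by
  rw [GX_eq]; ext i j
  fin_cases i <;> fin_cases j <;>
    simp [Matrix.vecHead, Matrix.vecTail, map_ofNat]

lemma GZmap : GZ.map (starRingEnd ℂ) = GZ := by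
  rw [GZ_eq]; ext i j
  fin_cases i <;> fin_cases j <;>
    simp [Matrix.vecHead, Matrix.vecTail, map_ofNat]

lemma GYmap : GY.map (starRingEnd ℂ) = -GY := by
  rw [GY_eq]; ext i j
  fin_cases i <;> fin_cases j <;>
    simp [Matrix.vecHead, Matrix.vecTail, map_ofNat]

lemma key1 (α : ℝ) : Complex.exp ((α : ℂ) * Complex.I) * (Real.cos α : ℂ)
    = (Complex.exp ((α : ℂ) * Complex.I) ^ 2 + 1) / 2 := by
  rw [Complex.exp_mul_I, ← Complex.ofReal_cos, ← Complex.ofReal_sin]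
  have h : (Real.sin α : ℂ) ^ 2 + (Real.cos α : ℂ) ^ 2 = 1 := by
    exact_mod_cast congrArg (Complex.ofReal) (Real.sin_sq_add_cos_sq α)
  linear_combination (1/2 : ℂ) * h - (Real.sin α : ℂ)^2/2 * Complex.I_sq

lemma key2 (α : ℝ) : Complex.I * Complex.exp ((α : ℂ) * Complex.I) * (Real.sin α : ℂ)
    = (Complex.exp ((α : ℂ) * Complex.I) ^ 2 - 1) / 2 := by
  rw [Complex.exp_mul_I, ← Complex.ofReal_cos, ← Complex.ofReal_sin]
  have h : (Real.sin α : ℂ) ^ 2 + (Real.cos α : ℂ) ^ 2 = 1 := by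
    exact_mod_cast congrArg (Complex.ofReal) (Real.sin_sq_add_cos_sq α)
  linear_combination (-1/2 : ℂ) * h + (Real.sin α : ℂ)^2/2 * Complex.I_sq

/-- Salpha in terms of w = exp(iα)^2. -/
def Sw (w : ℂ) : Matrix (Fin 4) (Fin 4) ℂ :=
  !![0,0,0,1;
     0, -((w + 1)/2), (w - 1)/2, 0;
     0, (w - 1)/2, -((w + 1)/2), 0;
     1,0,0,0]

lemma Salpha_eq (α : ℝ) : Salpha α = Sw (Complex.exp ((α : ℂ) * Complex.I) ^ 2) := by
  rw [Salpha, Sw, key1, key2]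

lemma SwX (w : ℂ) : Sw w * GX = -(GX * Sw w) := by
  rw [GX_eq, Sw]; ext i j
  fin_cases i <;> fin_cases j <;>
    simp [Matrix.mul_apply, Fin.sum_univ_four, Matrix.vecHead, Matrix.vecTail] <;> ring

lemma SwZ (w : ℂ) : Sw w * GZ = -(GZ * Sw w) := by
  rw [GZ_eq, Sw]; ext i j
  fin_cases i <;> fin_cases j <;>
    simp [Matrix.mul_apply, Fin.sum_univ_four, Matrix.vecHead, Matrix.vecTail]

lemma SwY (w : ℂ) : Sw w * GY = GY * Sw w := by
  rw [GY_eq, Sw]; ext i j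
  fin_cases i <;> fin_cases j <;>
    simp [Matrix.mul_apply, Fin.sum_univ_four, Matrix.vecHead, Matrix.vecTail] <;> ring

theorem stmt16 (S : Matrix (Fin 4) (Fin 4) ℂ) (hs : Sᵀ = S) (hu : Sᴴ * S = 1) :
    ((S * GX.map (starRingEnd ℂ) = -(GX * S) ∧ S * GZ.map (starRingEnd ℂ) = -(GZ * S)) ↔
      ∃ (c : ℂ) (α : ℝ), ‖c‖ = 1 ∧ S = c • Salpha α) ∧
    ((S * GX.map (starRingEnd ℂ) = -(GX * S) ∧ S * GZ.map (starRingEnd ℂ) = -(GZ * S)) →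
      S * GY.map (starRingEnd ℂ) = -(GY * S)) := by
  have hback : ∀ (c : ℂ) (α : ℝ), (c • Salpha α) * GX.map (starRingEnd ℂ)
      = -(GX * (c • Salpha α)) ∧ (c • Salpha α) * GZ.map (starRingEnd ℂ)
      = -(GZ * (c • Salpha α)) ∧ (c • Salpha α) * GY.map (starRingEnd ℂ)
      = -(GY * (c • Salpha α)) := by
    intro c α
    refine ⟨?_, ?_, ?_⟩
    · rw [GXmap, Matrix.smul_mul, Matrix.mul_smul, Salpha_eq, SwX, smul_neg]
    · rw [GZmap, Matrix.smul_mul, Matrix.mul_smul, Salpha_eq, SwZ, smul_neg]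
    · rw [GYmap, Matrix.mul_neg, Matrix.smul_mul, Matrix.mul_smul, Salpha_eq, SwY]
  have hfwd : (S * GX.map (starRingEnd ℂ) = -(GX * S) ∧ S * GZ.map (starRingEnd ℂ) = -(GZ * S)) →
      ∃ (c : ℂ) (α : ℝ), ‖c‖ = 1 ∧ S = c • Salpha α := by
    rintro ⟨hX, hZ⟩
    rw [GXmap, GX_eq] at hX
    rw [GZmap, GZ_eq] at hZ
    rw [← Matrix.ext_iff] at hX hZ
    rw [← Matrix.ext_iff] at hu
    have hsym : ∀ i j, S i j = S j i := fun i j => congrFun (congrFun hs j) i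
    have h00 := hZ 0 0
    have h01 := hZ 0 1
    have h02 := hZ 0 2
    have h10 := hZ 1 0
    have h20 := hZ 2 0
    have h13 := hZ 1 3
    have h23 := hZ 2 3
    have h31 := hZ 3 1
    have h32 := hZ 3 2
    have h33 := hZ 3 3
    have x01 := hX 0 1
    have x02 := hX 0 2
    have u00 := hu 0 0
    have u11 := hu 1 1
    have u21 := hu 2 1
    simp [Matrix.mul_apply, Fin.sum_univ_four, Matrix.vecHead, Matrix.vecTail,
      Matrix.conjTranspose_apply, Matrix.one_apply, Matrix.vecMul, dotProduct] at h00 h01 h02 h10 h20 h13 h23 h31 h32 h33 x01 x02 u00 u11 u21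
    have z00 : S 0 0 = 0 := by linear_combination (1/4 : ℂ) * h00
    have z33 : S 3 3 = 0 := by linear_combination (-1/4 : ℂ) * h33
    have h21 : S 2 1 = S 1 2 := hsym 2 1
    have h30 : S 3 0 = S 0 3 := hsym 3 0
    set c := S 0 3 with hcdef
    set b := S 1 1 with hbdef
    set d := S 1 2 with hddef
    have hA : c = -b - d := by linear_combination x01 - h21 - z00
    have hB : S 2 2 = b := by linear_combination x02 - x01 + h21
    rw [z00, h10, h20, h30] at u00
    rw [h01, h31, h21] at u11
    rw [h02, h32, h21, hB] at u21
    simp only [map_zero, zero_mul, mul_zero, zero_add, add_zero] at u00 u11 u21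
    -- u00 : conj c * c = 1, u11 : conj b * b + conj d * d = 1,
    -- u21 : conj d * b + conj b * d = 0
    have hc1 : ‖c‖ = 1 := by
      have h' : (Complex.normSq c : ℂ) = 1 := by
        rw [← Complex.mul_conj]; linear_combination u00
      have h'' : Complex.normSq c = 1 := by exact_mod_cast h'
      rw [Complex.norm_def, h'', Real.sqrt_one]
    have hcne : c ≠ 0 := by
      intro h; rw [h] at hc1; simp at hc1
    have hdb1 : ‖d - b‖ = 1 := by
      have h' : (Complex.normSq (d - b) : ℂ) = 1 := by
        rw [← Complex.mul_conj, map_sub]; linear_combination u11 - u21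
      have h'' : Complex.normSq (d - b) = 1 := by exact_mod_cast h'
      rw [Complex.norm_def, h'', Real.sqrt_one]
    set w := (d - b) / c with hwdef
    have habsw : ‖w‖ = 1 := by
      rw [hwdef, norm_div, hdb1, hc1, div_one]
    have hcw : c * w = d - b := by
      rw [hwdef, mul_comm]; exact div_mul_cancel₀ _ hcne
    set α : ℝ := w.arg / 2 with hadef
    have h2α : (α : ℂ) * Complex.I + (α : ℂ) * Complex.I = (w.arg : ℂ) * Complex.I := by
      rw [hadef]; push_cast; ring
    have hw : Complex.exp ((α : ℂ) * Complex.I) ^ 2 = w := by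
      rw [sq, ← Complex.exp_add, h2α]
      have := Complex.norm_mul_exp_arg_mul_I w
      rwa [habsw, Complex.ofReal_one, one_mul] at this
    refine ⟨c, α, hc1, ?_⟩
    rw [Salpha_eq, hw]
    refine Matrix.ext fun i j => ?_
    fin_cases i <;> fin_cases j <;>
      simp [Sw, Matrix.smul_apply, smul_eq_mul, Matrix.vecHead, Matrix.vecTail] <;>
      first
        | rfl
        | assumption
        | linear_combination (1/2 : ℂ) * hcw + (1/2 : ℂ) * hA
        | linear_combination (-1/2 : ℂ) * hcw + (1/2 : ℂ) * hA
        | linear_combination h21 - (1/2 : ℂ) * hcw + (1/2 : ℂ) * hA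
        | linear_combination hB + (1/2 : ℂ) * hcw + (1/2 : ℂ) * hA
  refine ⟨⟨hfwd, ?_⟩, ?_⟩
  · rintro ⟨c, α, _, rfl⟩
    exact ⟨(hback c α).1, (hback c α).2.1⟩
  · intro h
    obtain ⟨c, α, _, rfl⟩ := hfwd h
    exact (hback c α).2.2
end
end

section
/- Let U₁ be a d₁×d₁ unitary complex matrix and U₂ a d₂×d₂ unitary complex matrix, and suppose neither is symmetric (U₁ᵀ ≠ U₁ and U₂ᵀ ≠ U₂), i.e. neither of the antiunitaries Θ_j(v) = U_j·conj(v) is a conjugation. Then the Kronecker product U₁⊗U₂ is symmetric ((U₁⊗U₂)ᵀ = U₁⊗U₂, i.e. Θ₁⊗Θ₂ is a conjugation) if and only if U₁ᵀ = −U₁ and U₂ᵀ = −U₂ (equivalently, each U_j is unitarily congruent to a direct sum of 2×2 spin-flip blocks [[0, 1], [−1, 0]]). -/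
open Matrix Kronecker

noncomputable section

theorem stmt18 {d₁ d₂ : ℕ} (U₁ : Matrix (Fin d₁) (Fin d₁) ℂ) (U₂ : Matrix (Fin d₂) (Fin d₂) ℂ)
    (hu₁ : U₁ᴴ * U₁ = 1) (hu₂ : U₂ᴴ * U₂ = 1) (h₁ : U₁ᵀ ≠ U₁) (h₂ : U₂ᵀ ≠ U₂) :
    (U₁ ⊗ₖ U₂)ᵀ = U₁ ⊗ₖ U₂ ↔ (U₁ᵀ = -U₁ ∧ U₂ᵀ = -U₂) := by
  constructor
  · intro h
    have hent : ∀ (i j : Fin d₁) (k l : Fin d₂), U₁ j i * U₂ l k = U₁ i j * U₂ k l := by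
      intro i j k l
      have := congrFun (congrFun h (i, k)) (j, l)
      simpa [Matrix.transpose_apply, Matrix.kroneckerMap_apply] using this
    have h1ne : ∃ a b, U₁ a b ≠ 0 := by
      by_contra hc
      push_neg at hc
      exact h₁ (by ext i j; simp [hc])
    have h2ne : ∃ a b, U₂ a b ≠ 0 := by
      by_contra hc
      push_neg at hc
      exact h₂ (by ext i j; simp [hc])
    obtain ⟨a, b, hab⟩ := h1ne
    obtain ⟨k₀, l₀, hkl⟩ := h2ne
    have hba : U₁ b a ≠ 0 := by
      intro h0
      have h' := hent a b k₀ l₀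
      rw [h0, zero_mul] at h'
      exact mul_ne_zero hab hkl h'.symm
    set c : ℂ := U₁ a b / U₁ b a with hc
    have hU2 : ∀ k l, U₂ l k = c * U₂ k l := by
      intro k l
      have h' := hent a b k l
      rw [hc, div_mul_eq_mul_div, eq_div_iff hba]
      linear_combination h'
    have hc2 : c * c = 1 := by
      have e1 := hU2 k₀ l₀
      have e2 := hU2 l₀ k₀
      rw [e1] at e2
      have : (c * c - 1) * U₂ k₀ l₀ = 0 := by linear_combination -e2
      rcases mul_eq_zero.mp this with h' | h'
      · exact sub_eq_zero.mp h'
      · exact absurd h' hkl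
    have hcne : c ≠ 1 := by
      intro h'
      apply h₂
      ext k l
      simp only [Matrix.transpose_apply]
      rw [hU2 l k, h', one_mul]
    have hcm : c = -1 := by
      have : (c - 1) * (c + 1) = 0 := by ring_nf; linear_combination hc2
      rcases mul_eq_zero.mp this with h' | h'
      · exact absurd (sub_eq_zero.mp h') hcne
      · exact eq_neg_of_add_eq_zero_left h'
    have hU2' : U₂ᵀ = -U₂ := by
      ext k l
      simp only [Matrix.transpose_apply, Matrix.neg_apply]
      rw [hU2 k l, hcm]; ring
    refine ⟨?_, hU2'⟩
    ext i j
    simp only [Matrix.transpose_apply, Matrix.neg_apply]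
    have h' := hent i j k₀ l₀
    have h'' : U₂ l₀ k₀ = -U₂ k₀ l₀ := by
      have := congrFun (congrFun hU2' k₀) l₀
      simpa using this
    rw [h''] at h'
    have : (U₁ j i + U₁ i j) * U₂ k₀ l₀ = 0 := by linear_combination -h'
    rcases mul_eq_zero.mp this with h3 | h3
    · exact eq_neg_of_add_eq_zero_left h3
    · exact absurd h3 hkl
  · rintro ⟨ha, hb⟩
    ext ⟨i, k⟩ ⟨j, l⟩
    simp only [Matrix.transpose_apply, Matrix.kroneckerMap_apply]
    have h1 : U₁ j i = -U₁ i j := by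
      have := congrFun (congrFun ha i) j
      simpa using this
    have h2 : U₂ l k = -U₂ k l := by
      have := congrFun (congrFun hb k) l
      simpa using this
    rw [h1, h2]; ring
end
end
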